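/- Let p be a prime and F ⊆ L number fields with L/F a Galois extension of odd degree. Fix d ∈ ℕ, an integer d_v for each finite place v of F above p, and an integer d_v⁺ for each real place v of F; for a finite place w of L above p set d_w := d_v with v the place of F below w, and for a real place w of L set d_w⁺ := d_v⁺ with v the real place of F below w (such v is real since L/F is Galois of odd degree). If ∑_{v|p} (d − d_v)·[F_v : ℚ_p] = d·r₂(F) + ∑_{v real} (d − d_v⁺), then ∑_{w|p} (d − d_w)·[L_w : ℚ_p] = d·r₂(L) + ∑_{w real} (d − d_w⁺). -/

import Mathlib

/-!
STATEMENT 4: Let p be a prime and F ⊆ L number fields with L/F a Galois extension of odd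
degree.  Fix d ∈ ℕ, an integer d_v for each finite place v of F above p, and an integer
d_v⁺ for each real place v of F; for a finite place w of L above p set d_w := d_v with v
the place of F below w, and for a real place w of L set d_w⁺ := d_v⁺ with v the real place
of F below w (such v is real since L/F is Galois of odd degree).  If
∑_{v|p} (d − d_v)·[F_v : ℚ_p] = d·r₂(F) + ∑_{v real} (d − d_v⁺), then
∑_{w|p} (d − d_w)·[L_w : ℚ_p] = d·r₂(L) + ∑_{w real} (d − d_w⁺).
-/

open NumberField

/-- A finite place of a number field `K` above the rational prime `p`: a nonzero prime
ideal of the ring of integers of `K` containing `p`. -/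
def IsFinitePlaceAbove (p : ℕ) (K : Type*) [Field K] [NumberField K]
    (w : Ideal (𝓞 K)) : Prop :=
  w.IsPrime ∧ w ≠ ⊥ ∧ (p : 𝓞 K) ∈ w

/-- The local degree `[K_w : ℚ_p] = e(w|p) · f(w|p)`, the product of the ramification index
and the residue class degree of `w` over `p`. -/
noncomputable def localDegree (p : ℕ) (K : Type*) [Field K] [NumberField K]
    (w : Ideal (𝓞 K)) : ℕ :=
  Ideal.ramificationIdx' (Ideal.span {(p : ℤ)}) w *
    Ideal.inertiaDeg' (Ideal.span {(p : ℤ)}) w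

/-!
Both sides of the identity get multiplied by `[L : F]`. At the finite places this is the
fundamental identity `∑_{w ∣ v} e(w|v) f(w|v) = [L : F]` combined with the multiplicativity of `e`
and `f` in the tower `ℚ ⊆ F ⊆ L`. At the infinite places, odd degree forces `L/F` to be unramified
(a ramified place has a stabilizer of order 2 in `Gal(L/F)`), so `w` is real exactly when the
place below it is, and every infinite place of `F` has exactly `[L : F]` places above it.
-/

lemma Ideal.under_mem_primesOver {A B C : Type*} [CommRing A] [CommRing B] [CommRing C]
    [Algebra A B] [Algebra B C] [Algebra A C] [IsScalarTower A B C] {p : Ideal A} {P : Ideal C}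
    (hP : P ∈ p.primesOver C) : P.under B ∈ p.primesOver B :=
  have := hP.1
  have := hP.2
  ⟨inferInstance, LiesOver.tower_bot P (P.under B) p⟩

namespace NumberField.InfinitePlace

open Finset Module

open scoped Classical in
lemma sum_ite_isReal {K : Type*} [Field K] [NumberField K] {R : Type*} [CommSemiring R]
    (f : InfinitePlace K → R) (a : R) :
    ∑ w : InfinitePlace K, (if w.IsReal then f w else a) =
      a * nrComplexPlaces K + ∑ᶠ w : {w : InfinitePlace K // w.IsReal}, f w := by
  have hcomplex : #{w : InfinitePlace K | ¬w.IsReal} = nrComplexPlaces K := by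
    simp [nrComplexPlaces, Fintype.card_subtype, not_isReal_iff_isComplex]
  rw [sum_ite, finsum_eq_sum_of_fintype, sum_subtype _ mem_filter_univ f, sum_const, hcomplex,
    nsmul_eq_mul, add_comm, mul_comm]

variable {F L : Type*} [Field F] [Field L] [Algebra F L]

lemma liesOver_iff_comap_eq {w : InfinitePlace L} {v : InfinitePlace F} :
    w.LiesOver v ↔ w.comap (algebraMap F L) = v :=
  ⟨fun _ ↦ LiesOver.comap_eq w v, fun h ↦ ⟨by ext x; simp [← h]; rfl⟩⟩

lemma IsUnramified.isReal_iff_isReal_comap {w : InfinitePlace L} (h : w.IsUnramified F) :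
    w.IsReal ↔ (w.comap (algebraMap F L)).IsReal :=
  ⟨IsReal.comap _, fun hv ↦ (isUnramified_iff.mp h).resolve_right (not_isComplex_iff_isReal.mpr hv)⟩

variable [NumberField F] [NumberField L] [IsUnramifiedAtInfinitePlaces F L]

open scoped Classical in
lemma card_filter_comap_eq_finrank (v : InfinitePlace F) :
    #{w : InfinitePlace L | w.comap (algebraMap F L) = v} = finrank F L := by
  have hram : ramifiedPlacesOver L v = ∅ := by
    ext w
    simp [ramifiedPlacesOver, IsRamified, w.isUnramified F]
  have hunram : unramifiedPlacesOver L v = {w | w.comap (algebraMap F L) = v} := by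
    ext w
    simp [unramifiedPlacesOver, w.isUnramified F, liesOver_iff_comap_eq]
  rw [← unramifedPlacesOver_ncard_add_eq_finrank L v, hram, hunram, Set.ncard_empty, mul_zero,
    add_zero, Set.ncard_eq_toFinset_card']
  simp

lemma sum_comap_eq_finrank_smul {M : Type*} [AddCommMonoid M] (g : InfinitePlace F → M) :
    ∑ w : InfinitePlace L, g (w.comap (algebraMap F L)) = finrank F L • ∑ v, g v := by
  classical
  rw [← sum_fiberwise univ (fun w : InfinitePlace L ↦ w.comap (algebraMap F L)), smul_sum]
  refine sum_congr rfl fun v _ ↦ ?_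
  rw [sum_congr rfl fun w hw ↦ by rw [(mem_filter.mp hw).2], sum_const,
    card_filter_comap_eq_finrank]

end NumberField.InfinitePlace

section FinitePlaces

open Ideal Module

variable {p : ℕ} (hp : p.Prime)
include hp

lemma isFinitePlaceAbove_iff_mem_primesOver {K : Type*} [Field K] [NumberField K]
    {w : Ideal (𝓞 K)} : IsFinitePlaceAbove p K w ↔ w ∈ (span {(p : ℤ)}).primesOver (𝓞 K) := by
  have := Fact.mk hp
  have hp0 : span {(p : ℤ)} ≠ ⊥ := by simpa using hp.ne_zero
  refine ⟨fun ⟨hprime, _, hpw⟩ ↦ ⟨hprime, (liesOver_iff _ _).mpr ?_⟩, fun ⟨hprime, hlies⟩ ↦ ?_⟩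
  · refine (Int.ideal_span_isMaximal_of_prime p).eq_of_le (hprime.comap _).ne_top ?_
    simpa [span_singleton_le_iff_mem] using hpw
  · refine ⟨hprime, ne_bot_of_liesOver_of_ne_bot hp0 w, ?_⟩
    have hpu : (p : ℤ) ∈ under ℤ w := (liesOver_iff w _).mp hlies ▸ mem_span_singleton_self _
    simpa using hpu

lemma finsum_isFinitePlaceAbove_eq_sum {K : Type*} [Field K] [NumberField K] {M : Type*}
    [AddCommMonoid M] (f : Ideal (𝓞 K) → M) :
    ∑ᶠ w : {w // IsFinitePlaceAbove p K w}, f w =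
      ∑ w ∈ IsDedekindDomain.primesOverFinset (span {(p : ℤ)}) (𝓞 K), f w := by
  have := Fact.mk hp
  rw [finsum_subtype_eq_finsum_cond, finsum_cond_eq_sum_of_cond_iff]
  intro w _
  rw [isFinitePlaceAbove_iff_mem_primesOver hp,
    IsDedekindDomain.mem_primesOverFinset_iff (by simpa using hp.ne_zero)]

variable {F L : Type*} [Field F] [NumberField F] [Field L] [NumberField L] [Algebra F L]

section Fiber

variable {v : Ideal (𝓞 F)} (hv : v ∈ (span {(p : ℤ)}).primesOver (𝓞 F))
include hv

lemma filter_under_eq_primesOverFinset :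
    {w ∈ IsDedekindDomain.primesOverFinset (span {(p : ℤ)}) (𝓞 L) | w.under (𝓞 F) = v} =
      IsDedekindDomain.primesOverFinset v (𝓞 L) := by
  have := Fact.mk hp
  have hp0 : span {(p : ℤ)} ≠ ⊥ := by simpa using hp.ne_zero
  have hv0 : v ≠ ⊥ := ne_bot_of_mem_primesOver hp0 hv
  have := hv.1.isMaximal hv0
  have := hv.2
  ext w
  rw [Finset.mem_filter, IsDedekindDomain.mem_primesOverFinset_iff hp0,
    IsDedekindDomain.mem_primesOverFinset_iff hv0]
  refine ⟨fun ⟨⟨hwprime, _⟩, hwv⟩ ↦ ⟨hwprime, ⟨hwv.symm⟩⟩, fun ⟨hwprime, hwlies⟩ ↦ ?_⟩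
  exact ⟨⟨hwprime, LiesOver.trans w v _⟩, hwlies.over.symm⟩

variable (L) in
lemma sum_localDegree_primesOverFinset :
    ∑ w ∈ IsDedekindDomain.primesOverFinset v (𝓞 L), localDegree p L w =
      finrank F L * localDegree p F v := by
  have hv0 : v ≠ ⊥ := ne_bot_of_mem_primesOver (by simpa using hp.ne_zero) hv
  have := hv.1.isMaximal hv0
  have := hv.2
  have := Fact.mk hp
  have := (IsDedekindDomain.primesOver_finite v (𝓞 L)).fintype
  rw [IsFractionRing.finrank_eq (𝓞 F) F (𝓞 L) L, ← sum_ramification_inertia_eq_finrank v (𝓞 L),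
    Finset.sum_mul, Finset.sum_subtype _ fun w ↦ IsDedekindDomain.mem_primesOverFinset_iff hv0 _]
  refine Fintype.sum_congr _ _ fun ⟨w, hwprime, hwlies⟩ ↦ ?_
  have := hwprime.isMaximal (ne_bot_of_liesOver_of_ne_bot hv0 w)
  rw [localDegree, localDegree, ramificationIdx'_algebra_tower' _ v w,
    inertiaDeg'_algebra_tower _ v w, ramificationIdx'_eq_ramificationIdx v w hv0,
    inertiaDeg'_eq_inertiaDeg v w]
  ring

end Fiber

lemma finsum_isFinitePlaceAbove_under_mul_localDegree {R : Type*} [CommSemiring R]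
    (g : Ideal (𝓞 F) → R) :
    ∑ᶠ w : {w // IsFinitePlaceAbove p L w}, g (w.1.under (𝓞 F)) * localDegree p L w.1 =
      finrank F L * ∑ᶠ v : {v // IsFinitePlaceAbove p F v}, g v.1 * localDegree p F v.1 := by
  classical
  have hp0 : span {(p : ℤ)} ≠ ⊥ := by simpa using hp.ne_zero
  have := Fact.mk hp
  have hmaps : ∀ w ∈ IsDedekindDomain.primesOverFinset (span {(p : ℤ)}) (𝓞 L),
      w.under (𝓞 F) ∈ IsDedekindDomain.primesOverFinset (span {(p : ℤ)}) (𝓞 F) := by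
    simp only [IsDedekindDomain.mem_primesOverFinset_iff hp0]
    exact fun w ↦ under_mem_primesOver
  rw [finsum_isFinitePlaceAbove_eq_sum hp fun w ↦ g (w.under (𝓞 F)) * localDegree p L w,
    finsum_isFinitePlaceAbove_eq_sum hp fun v ↦ g v * localDegree p F v, Finset.mul_sum,
    ← Finset.sum_fiberwise_of_maps_to hmaps]
  refine Finset.sum_congr rfl fun v hv ↦ ?_
  rw [IsDedekindDomain.mem_primesOverFinset_iff hp0] at hv
  rw [Finset.sum_congr rfl fun w hw ↦ by rw [(Finset.mem_filter.mp hw).2], ← Finset.mul_sum,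
    filter_under_eq_primesOverFinset hp hv, ← Nat.cast_sum,
    sum_localDegree_primesOverFinset hp L hv]
  push_cast
  ring

end FinitePlaces

theorem data_equality_base_change_of_odd_galois
    (p : ℕ) (hp : p.Prime)
    (F L : Type*) [Field F] [NumberField F] [Field L] [NumberField L] [Algebra F L]
    [IsGalois F L] (hodd : Odd (Module.finrank F L))
    (d : ℕ) (dv : Ideal (𝓞 F) → ℤ) (dplus : InfinitePlace F → ℤ)
    (hF : ∑ᶠ v : {v : Ideal (𝓞 F) // IsFinitePlaceAbove p F v},
            (((d : ℤ) - dv v.1) * localDegree p F v.1) =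
          (d : ℤ) * InfinitePlace.nrComplexPlaces F +
            ∑ᶠ v : {v : InfinitePlace F // v.IsReal}, ((d : ℤ) - dplus v)) :
    ∑ᶠ w : {w : Ideal (𝓞 L) // IsFinitePlaceAbove p L w},
        (((d : ℤ) - dv (Ideal.comap (algebraMap (𝓞 F) (𝓞 L)) w.1)) * localDegree p L w.1) =
      (d : ℤ) * InfinitePlace.nrComplexPlaces L +
        ∑ᶠ w : {w : InfinitePlace L // w.IsReal},
          ((d : ℤ) - dplus ((w : InfinitePlace L).comap (algebraMap F L))) := by
  classical
  have := IsUnramifiedAtInfinitePlaces_of_odd_finrank hodd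
  let c : InfinitePlace F → ℤ := fun v ↦ if v.IsReal then d - dplus v else d
  calc _ = Module.finrank F L *
          ∑ᶠ v : {v // IsFinitePlaceAbove p F v}, (d - dv v.1) * localDegree p F v.1 :=
        finsum_isFinitePlaceAbove_under_mul_localDegree hp fun v ↦ d - dv v
    _ = Module.finrank F L * ∑ v, c v := by rw [hF, InfinitePlace.sum_ite_isReal]
    _ = ∑ w : InfinitePlace L, c (w.comap (algebraMap F L)) := by
        rw [InfinitePlace.sum_comap_eq_finrank_smul, nsmul_eq_mul]
    _ = ∑ w : InfinitePlace L, if w.IsReal then d - dplus (w.comap (algebraMap F L)) else d :=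
        Finset.sum_congr rfl fun w _ ↦ by simp only [c, (w.isUnramified F).isReal_iff_isReal_comap]
    _ = _ := InfinitePlace.sum_ite_isReal _ _
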